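/- Let Δ be a 2-local spatial derivation on L implemented by elements from F(Ω, B_sk(H)) and let i, j, p be pairwise distinct natural numbers. If a, b ∈ F(Ω, B_sk(H)) satisfy Δ(s_{i,j}) = [a, s_{i,j}] and Δ(s_{i,p}) = [b, s_{i,p}], then a^{i,j} + a^{j,i} = b^{i,j} + b^{j,i} (as functions on Ω). -/

import Mathlib

/-- The matrix unit `e_{i,j} ∈ B(H)` associated with an orthonormal basis `(e_n)`:
the rank-one operator `v ↦ ⟨v, e_j⟩ e_i` (inner product linear in `v`). -/
noncomputable def matUnit {H : Type*} [NormedAddCommGroup H] [InnerProductSpace ℂ H]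
    (e : HilbertBasis ℕ ℂ H) (i j : ℕ) : H →L[ℂ] H :=
  (innerSL ℂ (e j)).smulRight (e i)

lemma matUnit_apply {H : Type*} [NormedAddCommGroup H] [InnerProductSpace ℂ H]
    (e : HilbertBasis ℕ ℂ H) (i j : ℕ) (v : H) :
    matUnit e i j v = (inner ℂ (e j) v : ℂ) • e i := rfl

lemma comm_entry_sum {H : Type*} [NormedAddCommGroup H] [InnerProductSpace ℂ H]
    (e : HilbertBasis ℕ ℂ H) {i j : ℕ} (hij : i ≠ j) (d : H →L[ℂ] H)
    (hd : d * (matUnit e i j - matUnit e j i) = (matUnit e i j - matUnit e j i) * d) :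
    (inner ℂ (e i) (d (e j)) : ℂ) + inner ℂ (e j) (d (e i)) = 0 := by
  have hoe : ∀ k l : ℕ, (inner ℂ (e k) (e l) : ℂ) = if k = l then 1 else 0 :=
    orthonormal_iff_ite.mp e.orthonormal
  have happ : d ((matUnit e i j - matUnit e j i) (e i))
      = (matUnit e i j - matUnit e j i) (d (e i)) := by
    have := congrArg (fun f : H →L[ℂ] H => f (e i)) hd
    simpa [ContinuousLinearMap.mul_apply] using this
  have hSei : (matUnit e i j - matUnit e j i) (e i) = -(e j) := by
    simp [matUnit_apply, ContinuousLinearMap.sub_apply, hoe, hij.symm, e.orthonormal.1]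
  rw [hSei, map_neg] at happ
  have h2 := congrArg (fun v => (inner ℂ (e i) v : ℂ)) happ
  simp only [inner_neg_right, ContinuousLinearMap.sub_apply, matUnit_apply,
    inner_sub_right, inner_smul_right, hoe, eq_self_iff_true, if_true, if_neg hij, mul_one,
    mul_zero, sub_zero] at h2
  linear_combination -h2

lemma comm_entry_zero {H : Type*} [NormedAddCommGroup H] [InnerProductSpace ℂ H]
    (e : HilbertBasis ℕ ℂ H) {i j p : ℕ} (hij : i ≠ j) (hip : i ≠ p) (hjp : j ≠ p)
    (d : H →L[ℂ] H)
    (hd : d * (matUnit e i p - matUnit e p i) = (matUnit e i p - matUnit e p i) * d) :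
    (inner ℂ (e i) (d (e j)) : ℂ) = 0 := by
  have hoe : ∀ k l : ℕ, (inner ℂ (e k) (e l) : ℂ) = if k = l then 1 else 0 :=
    orthonormal_iff_ite.mp e.orthonormal
  have happ : d ((matUnit e i p - matUnit e p i) (e j))
      = (matUnit e i p - matUnit e p i) (d (e j)) := by
    have := congrArg (fun f : H →L[ℂ] H => f (e j)) hd
    simpa [ContinuousLinearMap.mul_apply] using this
  have hSej : (matUnit e i p - matUnit e p i) (e j) = 0 := by
    simp [matUnit_apply, ContinuousLinearMap.sub_apply, hoe, hij, hjp, hij.symm, hjp.symm]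
  rw [hSej, map_zero] at happ
  have h2 := congrArg (fun v => (inner ℂ (e p) v : ℂ)) happ
  simp only [inner_zero_right, ContinuousLinearMap.sub_apply, matUnit_apply,
    inner_sub_right, inner_smul_right, hoe, eq_self_iff_true, if_true,
    if_neg (Ne.symm hip : p ≠ i), mul_one, mul_zero] at h2
  linear_combination h2

lemma skew_entry {H : Type*} [NormedAddCommGroup H] [InnerProductSpace ℂ H] [CompleteSpace H]
    (d : H →L[ℂ] H) (hd : ContinuousLinearMap.adjoint d = -d) (x y : H) :
    (inner ℂ x (d y) : ℂ) = - (starRingEnd ℂ) (inner ℂ y (d x)) := by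
  rw [← ContinuousLinearMap.adjoint_inner_left, hd, ContinuousLinearMap.neg_apply,
    inner_neg_left, inner_conj_symm]

/-- **Lemma 4.1 (2) (Ayupov–Arzikulov–Umrzaqov).**
Let `L ⊆ F(Ω, B_sk(H))` be a Lie subalgebra containing `x_o` and the family
`{I·ê_{i,i}} ∪ {s_{i,j} : i ≠ j}`, and let `Δ` be a 2-local spatial derivation on `L`
implemented by elements of `F(Ω, B_sk(H))`.  If `i, j, p` are pairwise distinct and
`a, b ∈ F(Ω, B_sk(H))` satisfy `Δ(s_{i,j}) = [a, s_{i,j}]` and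
`Δ(s_{i,p}) = [b, s_{i,p}]`, then `a^{i,j} + a^{j,i} = b^{i,j} + b^{j,i}`
as functions on `Ω` (here `x^{i,j}(t) = ⟨x(t) e_j, e_i⟩`). -/
theorem two_local_spatial_derivation_entries_lemma_two
    {H : Type*} [NormedAddCommGroup H] [InnerProductSpace ℂ H] [CompleteSpace H]
    (e : HilbertBasis ℕ ℂ H) {Ω : Type*}
    (L : Set (Ω → H →L[ℂ] H))
    (hLskew : ∀ x ∈ L, ∀ t, ContinuousLinearMap.adjoint (x t) = -(x t))
    (hLadd : ∀ x ∈ L, ∀ y ∈ L, x + y ∈ L)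
    (hLsmul : ∀ (r : ℝ), ∀ x ∈ L, r • x ∈ L)
    (hLbracket : ∀ x ∈ L, ∀ y ∈ L, x * y - y * x ∈ L)
    (lam : ℕ → ℝ) (hlam0 : ∀ k, lam k ≠ 0)
    (hlam2 : Summable fun k => lam k ^ 2)
    (xoOp : H →L[ℂ] H)
    (hxoOp : HasSum (fun k => (lam k : ℂ) • (matUnit e k (k + 1) - matUnit e (k + 1) k)) xoOp)
    (hxoL : (fun _ : Ω => xoOp) ∈ L)
    (hdiagL : ∀ i : ℕ, (fun _ : Ω => Complex.I • matUnit e i i) ∈ L)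
    (hsL : ∀ i j : ℕ, i ≠ j → (fun _ : Ω => matUnit e i j - matUnit e j i) ∈ L)
    (Δ : (Ω → H →L[ℂ] H) → (Ω → H →L[ℂ] H))
    (hΔmem : ∀ x ∈ L, Δ x ∈ L)
    (hΔ : ∀ x ∈ L, ∀ y ∈ L, ∃ c : Ω → H →L[ℂ] H,
        (∀ t, ContinuousLinearMap.adjoint (c t) = -(c t)) ∧
        Δ x = c * x - x * c ∧ Δ y = c * y - y * c)
    (i j p : ℕ) (hij : i ≠ j) (hip : i ≠ p) (hjp : j ≠ p)
    (a b : Ω → H →L[ℂ] H)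
    (ha : ∀ t, ContinuousLinearMap.adjoint (a t) = -(a t))
    (hb : ∀ t, ContinuousLinearMap.adjoint (b t) = -(b t))
    (haΔ : Δ (fun _ => matUnit e i j - matUnit e j i)
        = a * (fun _ => matUnit e i j - matUnit e j i)
          - (fun _ => matUnit e i j - matUnit e j i) * a)
    (hbΔ : Δ (fun _ => matUnit e i p - matUnit e p i)
        = b * (fun _ => matUnit e i p - matUnit e p i)
          - (fun _ => matUnit e i p - matUnit e p i) * b) :
    ∀ t, (inner ℂ (e i) (a t (e j)) : ℂ) + inner ℂ (e j) (a t (e i))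
        = (inner ℂ (e i) (b t (e j)) : ℂ) + inner ℂ (e j) (b t (e i)) := by
  obtain ⟨c, hcskew, hc1, hc2⟩ := hΔ _ (hsL i j hij) _ (hsL i p hip)
  intro t
  -- commutation of `a t - c t` with `S = s_{i,j}`
  have hA : (a t - c t) * (matUnit e i j - matUnit e j i)
      = (matUnit e i j - matUnit e j i) * (a t - c t) := by
    have h1 := congrFun haΔ t
    have h2 := congrFun hc1 t
    simp only [Pi.sub_apply, Pi.mul_apply] at h1 h2
    have h := sub_eq_zero.mpr (h1.symm.trans h2)
    have h3 : (a t - c t) * (matUnit e i j - matUnit e j i)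
        - (matUnit e i j - matUnit e j i) * (a t - c t) = 0 := by
      rw [← h]; noncomm_ring
    exact sub_eq_zero.mp h3
  have hB : (b t - c t) * (matUnit e i p - matUnit e p i)
      = (matUnit e i p - matUnit e p i) * (b t - c t) := by
    have h1 := congrFun hbΔ t
    have h2 := congrFun hc2 t
    simp only [Pi.sub_apply, Pi.mul_apply] at h1 h2
    have h := sub_eq_zero.mpr (h1.symm.trans h2)
    have h3 : (b t - c t) * (matUnit e i p - matUnit e p i)
        - (matUnit e i p - matUnit e p i) * (b t - c t) = 0 := by
      rw [← h]; noncomm_ring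
    exact sub_eq_zero.mp h3
  have f1 := comm_entry_sum e hij (a t - c t) hA
  have f2 := comm_entry_zero e hij hip hjp (b t - c t) hB
  have hbcskew : ContinuousLinearMap.adjoint (b t - c t) = -(b t - c t) := by
    rw [map_sub, hb t, hcskew t]; abel
  have f3 : (inner ℂ (e j) ((b t - c t) (e i)) : ℂ) = 0 := by
    rw [skew_entry (b t - c t) hbcskew, f2, map_zero, neg_zero]
  simp only [ContinuousLinearMap.sub_apply, inner_sub_right] at f1 f2 f3
  linear_combination f1 - f2 - f3
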